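/- The polynomial p_d(x,y) (defined by s₀=2, s₁=x, s_{d+1}=x·s_d+y·s_{d-1}, p_d = s_d + (-1)^{d+1}y^d) is congruent to x^d + y^d modulo d (coefficientwise, as a polynomial over ℤ/dℤ) whenever d is prime. -/

import Mathlib

/-!
Over a ring in which `x = u + v` and `y = -u v`, the recurrence gives `s_d = u^d + v^d`. In
characteristic `d` prime this is `(u + v)^d = x^d`, and `(-1)^(d+1) = 1`, so `p_d - x^d - y^d`
vanishes at every point of the algebraic closure of `ZMod d`, where every pair `(x, y)` arises from
the roots `u, v` of `t^2 - x t - y`. A polynomial vanishing on an infinite field is zero, so the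
reduction of `p_d - x^d - y^d` modulo `d` is zero.
-/

open MvPolynomial in
/-- The integer polynomial recurrence `s₀ = 2`, `s₁ = x`, `s_{d+1} = x s_d + y s_{d-1}`. -/
noncomputable def sZ : ℕ → MvPolynomial (Fin 2) ℤ
  | 0 => 2
  | 1 => MvPolynomial.X 0
  | (n + 2) => MvPolynomial.X 0 * sZ (n + 1) + MvPolynomial.X 1 * sZ n

open MvPolynomial in
/-- `p_d = s_d + (-1)^{d+1} y^d`. -/
noncomputable def pZ (d : ℕ) : MvPolynomial (Fin 2) ℤ :=
  sZ d + (-1 : MvPolynomial (Fin 2) ℤ) ^ (d + 1) * (MvPolynomial.X 1) ^ d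

open Polynomial in
theorem IsAlgClosed.exists_add_eq_and_mul_eq {K : Type*} [Field K] [IsAlgClosed K] (a b : K) :
    ∃ u v : K, u + v = a ∧ u * v = b := by
  have h_deg : (X ^ 2 - C a * X + C b).degree = 2 := by compute_degree!
  obtain ⟨u, hu⟩ := IsAlgClosed.exists_root (X ^ 2 - C a * X + C b) (by simp [h_deg])
  refine ⟨u, a - u, by ring, ?_⟩
  simp only [IsRoot, eval_add, eval_sub, eval_mul, eval_pow, eval_C, eval_X] at hu
  linear_combination -hu

open MvPolynomial

section Evaluation

variable {R : Type*} [CommRing R] (g : ℤ →+* R) {x : Fin 2 → R} {u v : R}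

theorem eval₂_sZ (h_add : u + v = x 0) (h_mul : u * v = -x 1) :
    ∀ n, eval₂ g x (sZ n) = u ^ n + v ^ n
  | 0 => by simp only [sZ, pow_zero]; norm_num
  | 1 => by simp only [sZ, eval₂_X, pow_one, h_add]
  | n + 2 => by
    simp only [sZ, eval₂_add, eval₂_mul, eval₂_X, eval₂_sZ h_add h_mul (n + 1),
      eval₂_sZ h_add h_mul n]
    linear_combination (-(u ^ (n + 1) + v ^ (n + 1))) * h_add + (u ^ n + v ^ n) * h_mul

theorem eval₂_pZ_sub_X_pow_sub_X_pow_eq_zero (p : ℕ) [Fact p.Prime] [CharP R p]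
    (h_add : u + v = x 0) (h_mul : u * v = -x 1) :
    eval₂ g x (pZ p - X 0 ^ p - X 1 ^ p) = 0 := by
  have h_sign : (-1 : R) ^ (p + 1) = 1 := by
    rw [pow_succ, neg_one_pow_char R p, neg_one_mul, neg_neg]
  simp only [pZ, eval₂_sub, eval₂_add, eval₂_mul, eval₂_pow, eval₂_neg, eval₂_one, eval₂_X,
    eval₂_sZ g h_add h_mul, h_sign, ← h_add, ← add_pow_char]
  ring

end Evaluation

/-- For prime `d`, every coefficient of `p_d - x^d - y^d` is divisible by `d`. -/
theorem pd_congruent_mod_prime (d : ℕ) (hd : d.Prime) :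
    ∀ m, (d : ℤ) ∣ (pZ d - (X 0 : MvPolynomial (Fin 2) ℤ) ^ d - (X 1) ^ d).coeff m := by
  have : Fact d.Prime := ⟨hd⟩
  let K := AlgebraicClosure (ZMod d)
  rw [← C_dvd_iff_dvd_coeff,
    C_dvd_iff_map_hom_eq_zero (Int.castRingHom K) _ (CharP.intCast_eq_zero_iff K d)]
  refine MvPolynomial.funext fun x => ?_
  obtain ⟨u, v, h_add, h_mul⟩ := IsAlgClosed.exists_add_eq_and_mul_eq (x 0) (-x 1)
  rw [eval_map, map_zero]
  exact eval₂_pZ_sub_X_pow_sub_X_pow_eq_zero _ d h_add h_mul
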